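/- For λ ∈ Λ⁺, restriction from Ã^α to A^α gives: (i) Z̃^{(λ,0)} ≅ Z^{(λ,0)}; (ii) Z̃^{(λ,1)} ≅ Z^{(λ,0)} ⊕ Z^{(λ,1)}; (iii) L̃^{(λ,0)} ≅ L^{(λ,0)}; (iv) L̃^{(λ,1)} ≅ L^{(λ,1)}, all as A^α-modules. -/

import Mathlib

open MulOpposite

noncomputable section

universe u

section CompFactors

variable (A : Type u) [Ring A]

/-- The `i`-th factor of a series of submodules. -/
abbrev CompSeriesFactor {M : Type u} [AddCommGroup M] [Module A M]
    (s : CompositionSeries (Submodule A M)) (i : Fin s.length) : Type u :=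
  ↥(s i.succ) ⧸ Submodule.comap (s i.succ).subtype (s i.castSucc)

open Classical in
/-- The multiplicity of `N` among the composition factors of `M` (returning `0` if `M`
has no composition series); by the Jordan–Hölder theorem this does not depend on the
choice of composition series. -/
def compMult (M : Type u) [AddCommGroup M] [Module A M]
    (N : Type u) [AddCommGroup N] [Module A N] : ℕ :=
  if h : ∃ s : CompositionSeries (Submodule A M), s.head = ⊥ ∧ s.last = ⊤ then
    (Finset.univ.filter fun i : Fin h.choose.length =>
      Nonempty (CompSeriesFactor A h.choose i ≃ₗ[A] N)).card
  else 0

/-- `N` is (isomorphic to) a composition factor, i.e. a simple subquotient, of `M`. -/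
def IsCompFactor (M N : Type u) [AddCommGroup M] [Module A M]
    [AddCommGroup N] [Module A N] : Prop :=
  ∃ p q : Submodule A M, p ≤ q ∧
    IsSimpleModule A (↥q ⧸ Submodule.comap q.subtype p) ∧
    Nonempty ((↥q ⧸ Submodule.comap q.subtype p) ≃ₗ[A] N)

/-- `M₁` and `M₂` have a common composition factor. -/
def ShareFactor (M₁ M₂ : Type u) [AddCommGroup M₁] [Module A M₁]
    [AddCommGroup M₂] [Module A M₂] : Prop :=
  ∃ (p q : Submodule A M₁) (p' q' : Submodule A M₂), p ≤ q ∧ p' ≤ q' ∧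
    IsSimpleModule A (↥q ⧸ Submodule.comap q.subtype p) ∧
    Nonempty ((↥q ⧸ Submodule.comap q.subtype p) ≃ₗ[A]
      (↥q' ⧸ Submodule.comap q'.subtype p'))

/-- `e` is a primitive central idempotent (a block idempotent) of `A`. -/
def IsPrimCentralIdem (e : A) : Prop :=
  IsIdempotentElem e ∧ e ∈ Set.center A ∧ e ≠ 0 ∧
    ∀ f g : A, IsIdempotentElem f → IsIdempotentElem g → f ∈ Set.center A →
      g ∈ Set.center A → f * g = 0 → e = f + g → f = 0 ∨ g = 0

/-- A module belongs to the block of the central idempotent `e` when `e` acts as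
the identity on it. -/
def InBlock (e : A) (M : Type u) [AddCommGroup M] [Module A M] : Prop :=
  ∀ m : M, e • m = m

/-- `P` is a projective cover of `L`. -/
def IsProjCover (P L : Type u) [AddCommGroup P] [Module A P]
    [AddCommGroup L] [Module A L] : Prop :=
  Module.Projective A P ∧ ∃ f : P →ₗ[A] L, Function.Surjective f ∧
    ∀ N : Submodule A P, N ⊔ LinearMap.ker f = ⊤ → N = ⊤

end CompFactors

/-- The bilinear form on `ι → R` induced by a matrix `φ`. -/
def formSum {R ι : Type u} [CommRing R] [Fintype ι] (φ : ι → ι → R) (x y : ι → R) : R :=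
  ∑ s, ∑ t, x s * φ s t * y t

section Cellular

variable (R A : Type u) [CommRing R] [Ring A] [Algebra R A]
variable (Λp : Type u) [PartialOrder Λp] (T : Λp → Type u) [∀ l, Fintype (T l)]

/-- A cell datum (Graham–Lehrer) for the `R`-algebra `A`: a cellular basis
`c l s t` indexed by pairs of elements of `T l` for `l` in the poset `Λp`, an
anti-automorphism `star` swapping the two indices, and structure constants
`coeff` for right multiplication, acting on the second index modulo higher terms. -/
structure CellDatum where
  c : ∀ l, T l → T l → A
  basis : Module.Basis ((l : Λp) × (T l × T l)) R A
  basis_eq : ∀ l s t, basis ⟨l, (s, t)⟩ = c l s t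
  star : A →ₗ[R] A
  star_mul : ∀ a b, star (a * b) = star b * star a
  star_c : ∀ l s t, star (c l s t) = c l t s
  coeff : ∀ l, T l → A → T l → R
  mul_rule : ∀ (l) (s t : T l) (a : A),
    c l s t * a - ∑ v, coeff l t a v • c l s v ∈
      Submodule.span R {x : A | ∃ l' s' t', l < l' ∧ x = c l' s' t'}

variable {R A Λp T}

namespace CellDatum

variable (D : CellDatum R A Λp T)

/-- The span of the cellular basis elements with index strictly above `l`. -/
def Aup (l : Λp) : Submodule R A :=
  Submodule.span R {x : A | ∃ l' s' t', l < l' ∧ x = D.c l' s' t'}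

/-- The span of the cellular basis elements with index in `P`. -/
def cellSpan (P : Set Λp) : Submodule R A :=
  Submodule.span R {x : A | ∃ l s t, l ∈ P ∧ x = D.c l s t}

/-- The data of right standard (cell) modules: each `T l → R` is a right `A`-module
(i.e. a module over `Aᵐᵒᵖ`), the action is `R`-bilinear, and on the standard basis it is
given by the structure constants of the cell datum. -/
def RightStd [∀ l, DecidableEq (T l)] [∀ l, Module Aᵐᵒᵖ (T l → R)] : Prop :=
  (∀ (l : Λp) (r : R) (a : Aᵐᵒᵖ) (x : T l → R), a • (r • x) = r • (a • x)) ∧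
  (∀ (l : Λp) (t : T l) (a : A),
    (op a) • (Pi.single t 1 : T l → R) = fun v => D.coeff l t a v)

/-- The data of left standard (cell) modules. -/
def LeftStd [∀ l, DecidableEq (T l)] [∀ l, Module A (T l → R)] : Prop :=
  (∀ (l : Λp) (r : R) (a : A) (x : T l → R), a • (r • x) = r • (a • x)) ∧
  (∀ (l : Λp) (t : T l) (a : A),
    a • (Pi.single t 1 : T l → R) = fun v => D.coeff l t (D.star a) v)

/-- `φ` is the matrix of the canonical bilinear form on the standard modules:
`c l u s * c l t v ≡ φ l s t • c l u v` modulo `A^{∨l}`. -/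
def FormData (φ : ∀ l, T l → T l → R) : Prop :=
  ∀ (l : Λp) (s t u v : T l), D.c l u s * D.c l t v - φ l s t • D.c l u v ∈ D.Aup l

section Idem

variable {Λt M X : Type u} [PartialOrder Λt] [PartialOrder X] [Fintype M]

/-- Assumptions (A1)–(A4): `ι : Λp → Λt` realizes the cell poset inside the
bigger poset `Λt`, `κ : M → Λt` realizes the index set of the orthogonal idempotent
decomposition `1 = ∑ e μ`, each `e μ` lies in the span of the `c l s t` with
`ι l ≥ κ μ`, and every column of the cellular basis is fixed by some `e μ`. -/
structure IdemData (ι : Λp → Λt) (κ : M → Λt) (e : M → A) : Prop where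
  order_iff : ∀ l l', ι l ≤ ι l' ↔ l ≤ l'
  kappa_inj : Function.Injective κ
  ne_zero : ∀ μ, e μ ≠ 0
  idem : ∀ μ, e μ * e μ = e μ
  orth : ∀ μ ν, μ ≠ ν → e μ * e ν = 0
  sum_one : ∑ μ, e μ = 1
  mem_span : ∀ μ, e μ ∈ Submodule.span R {x : A | ∃ l s t, κ μ ≤ ι l ∧ x = D.c l s t}
  exists_idem : ∀ (l) (t : T l), ∃ μ, (∀ s, D.c l s t * e μ = D.c l s t) ∧
    (∀ u, e μ * D.c l t u = D.c l t u)

/-- `T(λ,μ)`: the indices `t` whose column (resp. row) of the cellular basis is fixed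
by right (resp. left) multiplication by `e μ`. -/
def Tset (e : M → A) (l : Λp) (μ : M) : Set (T l) :=
  {t | (∀ s, D.c l s t * e μ = D.c l s t) ∧ (∀ u, e μ * D.c l t u = D.c l t u)}

/-- `T⁺_α(λ)`. -/
def Tplus (e : M → A) (ι : Λp → Λt) (κ : M → Λt) (α : Λt → X) (l : Λp) : Set (T l) :=
  {t | ∃ μ, t ∈ D.Tset e l μ ∧ α (ι l) = α (κ μ)}

/-- `T⁻_α(λ)`. -/
def Tminus (e : M → A) (ι : Λp → Λt) (κ : M → Λt) (α : Λt → X) (l : Λp) : Set (T l) :=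
  {t | ∃ μ, t ∈ D.Tset e l μ ∧ α (κ μ) < α (ι l)}

/-- `I(λ,ε)`: `T⁺_α(λ)` for `ε = false` and `T⁻_α(λ)` for `ε = true`. -/
def Iset (e : M → A) (ι : Λp → Λt) (κ : M → Λt) (α : Λt → X) (l : Λp) : Bool → Set (T l)
  | false => D.Tplus e ι κ α l
  | true => D.Tminus e ι κ α l

/-- `J̃(λ,ε)`: `T⁺_α(λ)` for `ε = false` and all of `T(λ)` for `ε = true`. -/
def Jset (e : M → A) (ι : Λp → Λt) (κ : M → Λt) (α : Λt → X) (l : Λp) : Bool → Set (T l)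
  | false => D.Tplus e ι κ α l
  | true => Set.univ

/-- The Levi type subalgebra `A^α` (as a submodule). -/
def levi (e : M → A) (ι : Λp → Λt) (κ : M → Λt) (α : Λt → X) : Submodule R A :=
  Submodule.span R {x : A | ∃ l ε s t, s ∈ D.Iset e ι κ α l ε ∧ t ∈ D.Iset e ι κ α l ε ∧
    x = D.c l s t}

/-- The parabolic type subalgebra `Ã^α` (as a submodule). -/
def parab (e : M → A) (ι : Λp → Λt) (κ : M → Λt) (α : Λt → X) : Submodule R A :=
  Submodule.span R {x : A | ∃ l ε s t, s ∈ D.Iset e ι κ α l ε ∧ t ∈ D.Jset e ι κ α l ε ∧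
    x = D.c l s t}

/-- The span of the elements of the cellular basis of `A^α` of index strictly
above `(l,ε)` in `Ω`. -/
def upperOm (e : M → A) (ι : Λp → Λt) (κ : M → Λt) (α : Λt → X) (p : Λp × Bool) :
    Submodule R A :=
  Submodule.span R {x : A | ∃ (q : Λp × Bool) (s t : T q.1),
    ((p.2 < q.2) ∨ (p.2 = q.2 ∧ p.1 < q.1)) ∧
    s ∈ D.Iset e ι κ α q.1 q.2 ∧ t ∈ D.Iset e ι κ α q.1 q.2 ∧ x = D.c q.1 s t}

/-- The span of the elements of the standard basis of `Ã^α` of index strictly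
above `(l,ε)` in `Ω`. -/
def upperOmParab (e : M → A) (ι : Λp → Λt) (κ : M → Λt) (α : Λt → X) (p : Λp × Bool) :
    Submodule R A :=
  Submodule.span R {x : A | ∃ (q : Λp × Bool) (s t : T q.1),
    ((p.2 < q.2) ∨ (p.2 = q.2 ∧ p.1 < q.1)) ∧
    s ∈ D.Iset e ι κ α q.1 q.2 ∧ t ∈ D.Jset e ι κ α q.1 q.2 ∧ x = D.c q.1 s t}

end Idem

end CellDatum

end Cellular

/-! `T(λ)` is the disjoint union of `T⁺_α(λ)` and `T⁻_α(λ)`, and neither the right action of `A^α`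
on standard modules nor the bilinear form `φ` mixes the two halves. For the action: if a generator
`c λ' s' t'` of `A^α` has a nonzero structure constant from `t` to `v`, orthogonality of the
idempotents forces `s'`, `t'` to carry the idempotents of `t`, `v`, and cellularity forces `λ' ≤ λ`;
since `s'` and `t'` lie in the same half of `T(λ')`, monotonicity of `α` puts `t` and `v` in the
same half of `T(λ)`. For the form: `c t t * c s s = c t t * e μ * e ν * c s s = 0` when `t`, `s` lie
in different halves. Hence restricting coordinates to `T^±_α(λ)` is `A^α`-linear, splits
`Z̃^{(λ,1)}`, and identifies the radicals, which gives the statements on simple heads. -/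

/-- With `w = α (ι λ)`, `cond ε (x < w) (w = x)` is the condition for an index whose idempotent
has weight `x = α (κ μ)` to lie in `I(λ, ε)` (see `CellDatum.mem_Iset_iff`). -/
theorem eq_of_cond_lt_eq_of_le {X : Type*} [PartialOrder X] {ε ε₁ ε₂ : Bool} {x y z w : X}
    (hzw : z ≤ w) (hx : cond ε (x < z) (z = x)) (hy : cond ε (y < z) (z = y))
    (hx' : cond ε₁ (x < w) (w = x)) (hy' : cond ε₂ (y < w) (w = y)) : ε₁ = ε₂ := by
  cases ε <;> cases ε₁ <;> cases ε₂ <;> simp only [cond_true, cond_false] at * <;> order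

section CoordinateRestriction

variable {R τ : Type u} [CommRing R] {I J : Set τ}

theorem sum_inclusion_eq_sum {M : Type*} [AddCommMonoid M] [Fintype I] [Fintype J] (h : I ⊆ J)
    (f : J → M) (hf : ∀ t : J, (t : τ) ∉ I → f t = 0) :
    ∑ s : I, f (Set.inclusion h s) = ∑ t : J, f t :=
  Fintype.sum_of_injective _ (Set.inclusion_injective h) _ _
    (fun t ht => hf t fun htI => ht ⟨⟨t, htI⟩, rfl⟩) fun _ => rfl

theorem formSum_eq_zero_iff {ι : Type u} [Fintype ι] (φ : ι → ι → R) (x : ι → R) :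
    (∀ y, formSum φ x y = 0) ↔ ∀ s, ∑ t, x t * φ t s = 0 := by
  have h : ∀ y, formSum φ x y = Matrix.vecMul x φ ⬝ᵥ y := fun y => by
    simp only [formSum, Matrix.vecMul, dotProduct, Finset.sum_mul]
    exact Finset.sum_comm
  simp_rw [h, dotProduct_eq_zero_iff, funext_iff]
  rfl

theorem forall_sum_mul_eq_zero_iff_formSum_funLeft [Fintype I] [Fintype J] (h : I ⊆ J)
    (φ : τ → τ → R) (hφ : ∀ t : J, (t : τ) ∉ I → ∀ s : I, φ t s = 0) (x : J → R) :
    (∀ s : I, ∑ t : J, x t * φ t s = 0) ↔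
      ∀ y, formSum (fun s t : I => φ s t) (LinearMap.funLeft R R (Set.inclusion h) x) y = 0 := by
  rw [formSum_eq_zero_iff]
  refine forall_congr' fun s => ?_
  rw [← sum_inclusion_eq_sum h _ fun t ht => by rw [hφ t ht s, mul_zero]]
  rfl

theorem bijective_comp_inclusion_prod {β : Type*} {I₀ I₁ : Set τ} (h₀ : I₀ ⊆ J) (h₁ : I₁ ⊆ J)
    (hdisj : Disjoint I₀ I₁) (hcover : J ⊆ I₀ ∪ I₁) :
    Function.Bijective fun x : J → β => (x ∘ Set.inclusion h₀, x ∘ Set.inclusion h₁) := by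
  classical
  refine ⟨fun x y hxy => funext fun t => ?_, fun ⟨u, w⟩ => ?_⟩
  · rcases hcover t.2 with ht | ht
    · exact congrFun (congrArg Prod.fst hxy) ⟨t, ht⟩
    · exact congrFun (congrArg Prod.snd hxy) ⟨t, ht⟩
  · refine ⟨fun t => if ht : (t : τ) ∈ I₀ then u ⟨t, ht⟩
      else w ⟨t, (hcover t.2).resolve_left ht⟩, ?_⟩
    ext s
    · simp [s.2]
    · simp [Set.disjoint_right.1 hdisj s.2]

variable [DecidableEq τ]

theorem funLeft_inclusion_single (h : I ⊆ J) {t : τ} (hI : t ∈ I) (hJ : t ∈ J) :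
    LinearMap.funLeft R R (Set.inclusion h) (Pi.single ⟨t, hJ⟩ 1) = Pi.single ⟨t, hI⟩ 1 := by
  ext v
  simp [Pi.single_apply, Subtype.ext_iff]

theorem funLeft_inclusion_single_of_notMem (h : I ⊆ J) {t : J} (ht : (t : τ) ∉ I) :
    LinearMap.funLeft R R (Set.inclusion h) (Pi.single t 1) = 0 := by
  ext v
  have : Set.inclusion h v ≠ t := fun hv => ht (hv ▸ v.2)
  simp [this]

variable {A : Type*} [Ring A] [Algebra R A] (coeff : τ → A → τ → R)
  {B B' : Subalgebra R A} (hBB' : B ≤ B')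

theorem funLeft_inclusion_op_smul [Fintype I] [Fintype J] (hIJ : I ⊆ J)
    [Module Bᵐᵒᵖ (I → R)] [Module B'ᵐᵒᵖ (J → R)]
    (hI_comm : ∀ (r : R) (a : Bᵐᵒᵖ) (x : I → R), a • r • x = r • a • x)
    (hJ_comm : ∀ (r : R) (a : B'ᵐᵒᵖ) (x : J → R), a • r • x = r • a • x)
    (hI : ∀ (t : I) (a : B), op a • (Pi.single t 1 : I → R) = fun v : I => coeff t a v)
    (hJ : ∀ (t : J) (a : B'), op a • (Pi.single t 1 : J → R) = fun v : J => coeff t a v)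
    (hvanish : ∀ t ∈ J, t ∉ I → ∀ v ∈ I, ∀ a : B, coeff t a v = 0)
    (a : B) (x : J → R) :
    LinearMap.funLeft R R (Set.inclusion hIJ) (op (Subalgebra.inclusion hBB' a) • x) =
      op a • LinearMap.funLeft R R (Set.inclusion hIJ) x := by
  have hsingle : ∀ t : J, LinearMap.funLeft R R (Set.inclusion hIJ)
      (op (Subalgebra.inclusion hBB' a) • Pi.single t 1) =
        op a • LinearMap.funLeft R R (Set.inclusion hIJ) (Pi.single t 1) := by
    intro t
    by_cases ht : (t : τ) ∈ I
    · rw [hJ, funLeft_inclusion_single hIJ ht t.2, hI]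
      rfl
    · rw [hJ, funLeft_inclusion_single_of_notMem hIJ ht, smul_zero]
      ext v
      exact hvanish t t.2 ht v v.2 a
  conv_lhs => rw [← Finset.univ_sum_single x]
  conv_rhs => rw [← Finset.univ_sum_single x]
  simp only [Finset.smul_sum, map_sum]
  refine Finset.sum_congr rfl fun t _ => ?_
  have hx : (Pi.single t (x t) : J → R) = x t • Pi.single t 1 := by
    rw [← Pi.single_smul', smul_eq_mul, mul_one]
  rw [hx, hJ_comm, map_smul, hsingle, map_smul, hI_comm]

end CoordinateRestriction

theorem Submodule.nonempty_quotient_equiv_of_surjective {S S' M N : Type*} [Ring S] [Ring S']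
    [AddCommGroup M] [Module S' M] [AddCommGroup N] [Module S N] (σ : S →+* S')
    (p : Submodule S' M) (q : Submodule S N) (f : M →+ N) (hf : Function.Surjective f)
    (hσ : ∀ (a : S) (x : M), f (σ a • x) = a • f x) (hpq : ∀ x, x ∈ p ↔ f x ∈ q) :
    letI := Module.compHom M σ
    letI := Module.compHom (M ⧸ p) σ
    Nonempty ((M ⧸ p) ≃ₗ[S] N ⧸ q) := by
  let _ : Module S M := Module.compHom M σ
  let g : M →ₗ[S] N ⧸ q := q.mkQ ∘ₗ { f with map_smul' := hσ }
  -- `M ⧸ p`, with `S` acting through `σ`, is definitionally `M ⧸ p'`.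
  let p' : Submodule S M :=
    { p.toAddSubmonoid with smul_mem' := fun a _ hx => p.smul_mem (σ a) hx }
  have hker : p' = LinearMap.ker g := by
    ext x
    simp [g, p', hpq]
  exact ⟨(Submodule.quotEquivOfEq p' _ hker).trans
    (g.quotKerEquivOfSurjective ((Submodule.mkQ_surjective q).comp hf))⟩

namespace CellDatum

variable {R A : Type u} [CommRing R] [Ring A] [Algebra R A]
  {Λp : Type u} [PartialOrder Λp] {T : Λp → Type u} [∀ l, Fintype (T l)]
  (D : CellDatum R A Λp T)

theorem repr_c (l : Λp) (s t : T l) :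
    D.basis.repr (D.c l s t) = Finsupp.single ⟨l, (s, t)⟩ 1 := by
  rw [← D.basis_eq, Module.Basis.repr_self]

theorem repr_eq_zero_of_mem_cellSpan {P : Set Λp} {x : A} (hx : x ∈ D.cellSpan P)
    {l : Λp} (hl : l ∉ P) (s t : T l) : D.basis.repr x ⟨l, (s, t)⟩ = 0 := by
  have hle : D.cellSpan P ≤ LinearMap.ker
      (Finsupp.lapply ⟨l, (s, t)⟩ ∘ₗ D.basis.repr.toLinearMap) := by
    refine Submodule.span_le.2 ?_
    rintro _ ⟨l', s', t', hl', rfl⟩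
    have hne : (⟨l', (s', t')⟩ : (l : Λp) × (T l × T l)) ≠ ⟨l, (s, t)⟩ := by
      rintro ⟨⟩
      exact hl hl'
    simp [repr_c, Finsupp.single_eq_of_ne' hne]
  exact hle hx

theorem mul_mem_cellSpan {P : Set Λp} (hP : IsUpperSet P) {x : A} (hx : x ∈ D.cellSpan P)
    (a : A) : x * a ∈ D.cellSpan P := by
  induction hx using Submodule.span_induction with
  | mem x hx =>
    obtain ⟨l, s, t, hl, rfl⟩ := hx
    rw [← sub_add_cancel (D.c l s t * a) (∑ v, D.coeff l t a v • D.c l s v)]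
    refine add_mem ?_ (sum_mem fun v _ => Submodule.smul_mem _ _ (Submodule.subset_span
      ⟨l, s, v, hl, rfl⟩))
    refine Submodule.span_mono ?_ (D.mul_rule l s t a)
    rintro _ ⟨l', s', t', hll', rfl⟩
    exact ⟨l', s', t', hP hll'.le hl, rfl⟩
  | zero => simp
  | add x y _ _ hx hy => rw [add_mul]; exact add_mem hx hy
  | smul r x _ hx => rw [smul_mul_assoc]; exact Submodule.smul_mem _ _ hx

theorem star_mem_cellSpan {P : Set Λp} {x : A} (hx : x ∈ D.cellSpan P) :
    D.star x ∈ D.cellSpan P := by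
  induction hx using Submodule.span_induction with
  | mem x hx =>
    obtain ⟨l, s, t, hl, rfl⟩ := hx
    rw [D.star_c]
    exact Submodule.subset_span ⟨l, t, s, hl, rfl⟩
  | zero => simp
  | add x y _ _ hx hy => rw [map_add]; exact add_mem hx hy
  | smul r x _ hx => rw [map_smul]; exact Submodule.smul_mem _ _ hx

theorem c_mul_c_mem_cellSpan_Ici (l : Λp) (s t : T l) (l' : Λp) (s' t' : T l') :
    D.c l s t * D.c l' s' t' ∈ D.cellSpan (Set.Ici l') := by
  have h := D.star_mem_cellSpan (D.mul_mem_cellSpan (isUpperSet_Ici l')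
    (Submodule.subset_span ⟨l', t', s', Set.self_mem_Ici, rfl⟩) (D.c l t s))
  rwa [D.star_mul, D.star_c, D.star_c] at h

theorem repr_c_mul_eq_sum (l : Λp) (s t v : T l) (a b : A) :
    D.basis.repr (D.c l s t * a * b) ⟨l, (s, v)⟩ =
      ∑ w, D.coeff l t a w * D.basis.repr (D.c l s w * b) ⟨l, (s, v)⟩ := by
  have hup : (D.c l s t * a - ∑ w, D.coeff l t a w • D.c l s w) * b ∈
      D.cellSpan (Set.Ioi l) :=
    D.mul_mem_cellSpan (isUpperSet_Ioi l) (D.mul_rule l s t a) b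
  rw [← sub_add_cancel (D.c l s t * a) (∑ w, D.coeff l t a w • D.c l s w), add_mul, map_add,
    Finsupp.add_apply, D.repr_eq_zero_of_mem_cellSpan hup (lt_irrefl l), zero_add,
    Finset.sum_mul, map_sum, Finsupp.finsetSum_apply]
  simp only [smul_mul_assoc, map_smul, Finsupp.smul_apply, smul_eq_mul]

theorem coeff_eq_repr (l : Λp) (s t v : T l) (b : A) :
    D.coeff l t b v = D.basis.repr (D.c l s t * b) ⟨l, (s, v)⟩ := by
  classical
  rw [← mul_one (D.c l s t * b), D.repr_c_mul_eq_sum, Finset.sum_eq_single v]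
  · simp [repr_c]
  · intro w _ hw
    have hne : (⟨l, (s, w)⟩ : (l : Λp) × (T l × T l)) ≠ ⟨l, (s, v)⟩ := by simp [hw]
    rw [mul_one, repr_c, Finsupp.single_eq_of_ne' hne, mul_zero]
  · simp

theorem coeff_mul (l : Λp) (t v : T l) (a b : A) :
    D.coeff l t (a * b) v = ∑ w, D.coeff l t a w * D.coeff l w b v := by
  simp only [D.coeff_eq_repr l t, ← mul_assoc, D.repr_c_mul_eq_sum l t t]

theorem coeff_zero (l : Λp) (t v : T l) : D.coeff l t 0 v = 0 := by
  rw [D.coeff_eq_repr l t, mul_zero, map_zero, Finsupp.zero_apply]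

theorem coeff_eq_zero_of_mem_span {l : Λp} {t v : T l} {s : Set A} {a : A}
    (ha : a ∈ Submodule.span R s) (h : ∀ b ∈ s, D.coeff l t b v = 0) : D.coeff l t a v = 0 := by
  let f : A →ₗ[R] R :=
    Finsupp.lapply ⟨l, (t, v)⟩ ∘ₗ D.basis.repr.toLinearMap ∘ₗ LinearMap.mulLeft R (D.c l t t)
  have hf : ∀ b, f b = D.coeff l t b v := fun b => (D.coeff_eq_repr l t t v b).symm
  have hle : Submodule.span R s ≤ LinearMap.ker f :=
    Submodule.span_le.2 fun b hb => by simp [hf, h b hb]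
  rw [← hf]
  exact hle ha

theorem le_of_coeff_c_ne_zero {l l' : Λp} {t v : T l} {s' t' : T l'}
    (h : D.coeff l t (D.c l' s' t') v ≠ 0) : l' ≤ l := by
  by_contra hl
  rw [D.coeff_eq_repr l t] at h
  exact h (D.repr_eq_zero_of_mem_cellSpan (D.c_mul_c_mem_cellSpan_Ici l t t l' s' t') hl t v)

theorem c_ne_zero [Nontrivial R] (l : Λp) (s t : T l) : D.c l s t ≠ 0 :=
  D.basis_eq l s t ▸ D.basis.ne_zero _

section Idempotents

variable {Λt M X : Type u} [PartialOrder X]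
  {ι : Λp → Λt} {κ : M → Λt} {e : M → A} {α : Λt → X}

theorem coeff_idem_self {l : Λp} {v : T l} {ν : M} (hv : v ∈ D.Tset e l ν) :
    D.coeff l v (e ν) v = 1 := by
  rw [D.coeff_eq_repr l v, hv.1 v, repr_c, Finsupp.single_eq_same]

theorem mem_Iset_iff {l : Λp} {t : T l} {ε : Bool} :
    t ∈ D.Iset e ι κ α l ε ↔
      ∃ μ, t ∈ D.Tset e l μ ∧ cond ε (α (κ μ) < α (ι l)) (α (ι l) = α (κ μ)) := by
  cases ε <;> rfl

variable [PartialOrder Λt] [Fintype M]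

theorem coeff_idem_mul_of_ne (hA : D.IdemData ι κ e) {l : Λp} {t : T l} {μ μ' : M}
    (ht : t ∈ D.Tset e l μ) (hμ : μ ≠ μ') (b : A) (v : T l) : D.coeff l t (e μ' * b) v = 0 := by
  rw [D.coeff_eq_repr l t, ← ht.1 t, mul_assoc, ← mul_assoc (e μ), hA.orth μ μ' hμ, zero_mul,
    mul_zero, map_zero, Finsupp.zero_apply]

theorem coeff_idem_of_ne (hA : D.IdemData ι κ e) {l : Λp} {v w : T l} {ν : M}
    (hv : v ∈ D.Tset e l ν) (hw : w ≠ v) : D.coeff l w (e ν) v = 0 := by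
  obtain ⟨ρ, hwρ, -⟩ := hA.exists_idem l w
  rw [D.coeff_eq_repr l v]
  by_cases hρ : ρ = ν
  · subst hρ
    rw [hwρ v, repr_c, Finsupp.single_eq_of_ne' (by simp [hw])]
  · rw [← hwρ v, mul_assoc, hA.orth ρ ν hρ, mul_zero, map_zero, Finsupp.zero_apply]

theorem coeff_mul_idem (hA : D.IdemData ι κ e) {l : Λp} {v : T l} {ν : M}
    (hv : v ∈ D.Tset e l ν) (t : T l) (b : A) : D.coeff l t (b * e ν) v = D.coeff l t b v := by
  rw [D.coeff_mul, Finset.sum_eq_single v (fun w _ hw => by rw [D.coeff_idem_of_ne hA hv hw,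
    mul_zero]) (fun h => absurd (Finset.mem_univ v) h), D.coeff_idem_self hv, mul_one]

theorem coeff_c_eq_zero_of_ne_left (hA : D.IdemData ι κ e) {l l' : Λp} {t : T l}
    {s' : T l'} {μ μ' : M} (ht : t ∈ D.Tset e l μ) (hs' : s' ∈ D.Tset e l' μ') (hμ : μ ≠ μ')
    (t' : T l') (v : T l) : D.coeff l t (D.c l' s' t') v = 0 := by
  rw [← hs'.2 t']
  exact D.coeff_idem_mul_of_ne hA ht hμ _ v

theorem coeff_c_eq_zero_of_ne_right (hA : D.IdemData ι κ e) {l l' : Λp} {v : T l}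
    {t' : T l'} {ν ν' : M} (hv : v ∈ D.Tset e l ν) (ht' : t' ∈ D.Tset e l' ν') (hν : ν ≠ ν')
    (t : T l) (s' : T l') : D.coeff l t (D.c l' s' t') v = 0 := by
  rw [← D.coeff_mul_idem hA hv, ← ht'.1 s', mul_assoc, hA.orth ν' ν hν.symm, mul_zero,
    coeff_zero]

theorem coeff_eq_zero_of_mem_Iset_of_ne (hA : D.IdemData ι κ e) (hα : Monotone α) {l : Λp}
    {t v : T l} {ε₁ ε₂ : Bool} (hne : ε₁ ≠ ε₂) (ht : t ∈ D.Iset e ι κ α l ε₁)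
    (hv : v ∈ D.Iset e ι κ α l ε₂) {a : A} (ha : a ∈ D.levi e ι κ α) :
    D.coeff l t a v = 0 := by
  obtain ⟨μ, htμ, hμ⟩ := D.mem_Iset_iff.1 ht
  obtain ⟨ν, hvν, hν⟩ := D.mem_Iset_iff.1 hv
  refine D.coeff_eq_zero_of_mem_span ha ?_
  rintro _ ⟨l', ε', s', t', hs', ht', rfl⟩
  obtain ⟨μ', hs'μ', hμ'⟩ := D.mem_Iset_iff.1 hs'
  obtain ⟨ν', ht'ν', hν'⟩ := D.mem_Iset_iff.1 ht'
  by_contra h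
  obtain rfl : μ = μ' := by_contra fun hμμ' =>
    h (D.coeff_c_eq_zero_of_ne_left hA htμ hs'μ' hμμ' _ _)
  obtain rfl : ν = ν' := by_contra fun hνν' =>
    h (D.coeff_c_eq_zero_of_ne_right hA hvν ht'ν' hνν' _ _)
  exact hne (eq_of_cond_lt_eq_of_le (hα ((hA.order_iff l' l).2 (D.le_of_coeff_c_ne_zero h)))
    hμ' hν' hμ hν)

theorem form_eq_zero_of_mem_Iset_of_ne (hA : D.IdemData ι κ e) {φ : ∀ l, T l → T l → R}
    (hφ : D.FormData φ) {l : Λp} {t s : T l} {ε₁ ε₂ : Bool} (hne : ε₁ ≠ ε₂)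
    (ht : t ∈ D.Iset e ι κ α l ε₁) (hs : s ∈ D.Iset e ι κ α l ε₂) : φ l t s = 0 := by
  obtain ⟨μ, htμ, hμ⟩ := D.mem_Iset_iff.1 ht
  obtain ⟨ν, hsν, hν⟩ := D.mem_Iset_iff.1 hs
  have hμν : μ ≠ ν := by
    rintro rfl
    exact hne (eq_of_cond_lt_eq_of_le le_rfl hμ hμ hμ hν)
  have hzero : D.c l t t * D.c l s s = 0 := by
    rw [← htμ.1 t, ← hsν.2 s, mul_assoc, ← mul_assoc (e μ), hA.orth μ ν hμν, zero_mul, mul_zero]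
  have h := hφ l t s t s
  rw [hzero, zero_sub, neg_mem_iff] at h
  simpa [repr_c] using D.repr_eq_zero_of_mem_cellSpan h (lt_irrefl l) t s

variable {D} in
theorem IdemData.nontrivial (hA : D.IdemData ι κ e) {l : Λp} (t : T l) : Nontrivial R := by
  obtain ⟨μ, -⟩ := hA.exists_idem l t
  by_contra h
  rw [not_nontrivial_iff_subsingleton] at h
  have := Module.subsingleton R A
  exact hA.ne_zero μ (Subsingleton.elim _ _)

theorem eq_of_mem_Tset (hA : D.IdemData ι κ e) {l : Λp} {t : T l} {μ ν : M}
    (hμ : t ∈ D.Tset e l μ) (hν : t ∈ D.Tset e l ν) : μ = ν := by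
  have := hA.nontrivial t
  by_contra h
  apply D.c_ne_zero l t t
  calc D.c l t t = D.c l t t * e μ * e ν := by rw [hμ.1, hν.1]
    _ = 0 := by rw [mul_assoc, hA.orth μ ν h, mul_zero]

theorem le_of_mem_Tset (hA : D.IdemData ι κ e) {l : Λp} {t : T l} {μ : M}
    (ht : t ∈ D.Tset e l μ) : κ μ ≤ ι l := by
  have := hA.nontrivial t
  have hmem : D.c l t t ∈ D.cellSpan {l' | κ μ ≤ ι l'} := ht.2 t ▸
    D.mul_mem_cellSpan (fun l₁ l₂ h h₁ => le_trans h₁ ((hA.order_iff l₁ l₂).2 h)) (hA.mem_span μ) _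
  by_contra h
  simpa [repr_c] using D.repr_eq_zero_of_mem_cellSpan hmem h t t

theorem disjoint_Iset (hA : D.IdemData ι κ e) (l : Λp) :
    Disjoint (D.Iset e ι κ α l false) (D.Iset e ι κ α l true) := by
  refine Set.disjoint_left.2 fun t ⟨μ, hμ, heq⟩ ⟨ν, hν, hlt⟩ => ?_
  obtain rfl := D.eq_of_mem_Tset hA hμ hν
  exact hlt.ne heq.symm

theorem mem_Iset_false_or_true (hA : D.IdemData ι κ e) (hα : Monotone α)
    (l : Λp) (t : T l) : t ∈ D.Iset e ι κ α l false ∨ t ∈ D.Iset e ι κ α l true := by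
  obtain ⟨μ, hμ⟩ := hA.exists_idem l t
  rcases (hα (D.le_of_mem_Tset hA hμ)).lt_or_eq with hlt | heq
  · exact Or.inr ⟨μ, hμ, hlt⟩
  · exact Or.inl ⟨μ, hμ, heq.symm⟩

theorem mem_Iset_not_of_notMem (hA : D.IdemData ι κ e) (hα : Monotone α)
    {l : Λp} {t : T l} {ε : Bool} (ht : t ∉ D.Iset e ι κ α l ε) : t ∈ D.Iset e ι κ α l !ε := by
  cases ε <;> simpa [ht] using D.mem_Iset_false_or_true hA hα l t

theorem coeff_eq_zero_of_notMem_Iset (hA : D.IdemData ι κ e) (hα : Monotone α) {l : Λp}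
    {t v : T l} {ε : Bool} (ht : t ∉ D.Iset e ι κ α l ε) (hv : v ∈ D.Iset e ι κ α l ε) {a : A}
    (ha : a ∈ D.levi e ι κ α) : D.coeff l t a v = 0 :=
  D.coeff_eq_zero_of_mem_Iset_of_ne hA hα (Bool.not_ne_self ε)
    (D.mem_Iset_not_of_notMem hA hα ht) hv ha

theorem form_eq_zero_of_notMem_Iset (hA : D.IdemData ι κ e) (hα : Monotone α)
    {φ : ∀ l, T l → T l → R} (hφ : D.FormData φ) {l : Λp} {t s : T l} {ε : Bool}
    (ht : t ∉ D.Iset e ι κ α l ε) (hs : s ∈ D.Iset e ι κ α l ε) : φ l t s = 0 :=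
  D.form_eq_zero_of_mem_Iset_of_ne hA hφ (Bool.not_ne_self ε)
    (D.mem_Iset_not_of_notMem hA hα ht) hs

end Idempotents

end CellDatum

theorem stmt_15_general
    {R A : Type u} [CommRing R] [Ring A] [Algebra R A]
    {Λp : Type u} [PartialOrder Λp]
    {T : Λp → Type u} [∀ l, Fintype (T l)] [∀ l, DecidableEq (T l)]
    {Λt M X : Type u} [PartialOrder Λt] [PartialOrder X] [Fintype M]
    (D : CellDatum R A Λp T)
    (ι : Λp → Λt) (κ : M → Λt) (e : M → A)
    (hA : D.IdemData ι κ e)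
    (α : Λt → X) (hα : Monotone α)
    (φ : ∀ l, T l → T l → R) (hφ : D.FormData φ)
    -- the Levi type subalgebra `A^α` and its standard module data
    (Asub : Subalgebra R A) (hAsub : Asub.toSubmodule = D.levi e ι κ α)
    [∀ (l : Λp) (ε : Bool), Fintype ↥(D.Iset e ι κ α l ε)]
    [∀ (l : Λp) (ε : Bool), Module (↥Asub)ᵐᵒᵖ (↥(D.Iset e ι κ α l ε) → R)]
    (hZsmul : ∀ (l : Λp) (ε : Bool) (r : R) (a : (↥Asub)ᵐᵒᵖ)
      (x : ↥(D.Iset e ι κ α l ε) → R), a • (r • x) = r • (a • x))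
    (hZact : ∀ (l : Λp) (ε : Bool) (t : ↥(D.Iset e ι κ α l ε)) (a : Asub),
      (op a) • (Pi.single t 1 : ↥(D.Iset e ι κ α l ε) → R) =
        fun v => D.coeff l t.1 a.1 v.1)
    (radZ : ∀ (l : Λp) (ε : Bool), Submodule (↥Asub)ᵐᵒᵖ (↥(D.Iset e ι κ α l ε) → R))
    (hradZ : ∀ (l : Λp) (ε : Bool) (x : ↥(D.Iset e ι κ α l ε) → R),
      x ∈ radZ l ε ↔ ∀ y,
        formSum (fun s t : ↥(D.Iset e ι κ α l ε) => φ l s.1 t.1) x y = 0)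
    -- the parabolic type subalgebra `Ã^α` and its right standard module data
    (Asubt : Subalgebra R A)
    (hle : Asub ≤ Asubt)
    [∀ (l : Λp) (ε : Bool), Fintype ↥(D.Jset e ι κ α l ε)]
    [∀ (l : Λp) (ε : Bool), Module (↥Asubt)ᵐᵒᵖ (↥(D.Jset e ι κ α l ε) → R)]
    (hZtsmul : ∀ (l : Λp) (ε : Bool) (r : R) (a : (↥Asubt)ᵐᵒᵖ)
      (x : ↥(D.Jset e ι κ α l ε) → R), a • (r • x) = r • (a • x))
    (hZtact : ∀ (l : Λp) (ε : Bool) (t : ↥(D.Jset e ι κ α l ε)) (a : Asubt),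
      (op a) • (Pi.single t 1 : ↥(D.Jset e ι κ α l ε) → R) =
        fun v => D.coeff l t.1 a.1 v.1)
    (radZt : ∀ (l : Λp) (ε : Bool), Submodule (↥Asubt)ᵐᵒᵖ (↥(D.Jset e ι κ α l ε) → R))
    (hradZt : ∀ (l : Λp) (ε : Bool) (x : ↥(D.Jset e ι κ α l ε) → R),
      x ∈ radZt l ε ↔ ∀ s : ↥(D.Iset e ι κ α l ε),
        ∑ t, x t * φ l t.1 s.1 = 0) :
    ∀ l : Λp,
      letI : Module (↥Asub)ᵐᵒᵖ (↥(D.Jset e ι κ α l false) → R) :=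
        Module.compHom _ (RingHom.op (Subalgebra.inclusion hle).toRingHom)
      letI : Module (↥Asub)ᵐᵒᵖ (↥(D.Jset e ι κ α l true) → R) :=
        Module.compHom _ (RingHom.op (Subalgebra.inclusion hle).toRingHom)
      letI : Module (↥Asub)ᵐᵒᵖ ((↥(D.Jset e ι κ α l false) → R) ⧸ radZt l false) :=
        Module.compHom _ (RingHom.op (Subalgebra.inclusion hle).toRingHom)
      letI : Module (↥Asub)ᵐᵒᵖ ((↥(D.Jset e ι κ α l true) → R) ⧸ radZt l true) :=
        Module.compHom _ (RingHom.op (Subalgebra.inclusion hle).toRingHom)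
      -- (i)
      (∃ F : (↥(D.Jset e ι κ α l false) → R) ≃ₗ[(↥Asub)ᵐᵒᵖ]
          (↥(D.Iset e ι κ α l false) → R),
        ∀ t : ↥(D.Jset e ι κ α l false),
          F (Pi.single t 1) = Pi.single (⟨t.1, t.2⟩ : ↥(D.Iset e ι κ α l false)) 1) ∧
      -- (ii)
      (∃ F : (↥(D.Jset e ι κ α l true) → R) ≃ₗ[(↥Asub)ᵐᵒᵖ]
          ((↥(D.Iset e ι κ α l false) → R) × (↥(D.Iset e ι κ α l true) → R)),
        (∀ (t : T l) (h : t ∈ D.Iset e ι κ α l false),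
          F (Pi.single (⟨t, Set.mem_univ t⟩ : ↥(D.Jset e ι κ α l true)) 1) =
            (Pi.single ⟨t, h⟩ 1, 0)) ∧
        (∀ (t : T l) (h : t ∈ D.Iset e ι κ α l true),
          F (Pi.single (⟨t, Set.mem_univ t⟩ : ↥(D.Jset e ι κ α l true)) 1) =
            (0, Pi.single ⟨t, h⟩ 1))) ∧
      -- (iii)
      Nonempty (((↥(D.Jset e ι κ α l false) → R) ⧸ radZt l false) ≃ₗ[(↥Asub)ᵐᵒᵖ]
        ((↥(D.Iset e ι κ α l false) → R) ⧸ radZ l false)) ∧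
      -- (iv)
      Nonempty (((↥(D.Jset e ι κ α l true) → R) ⧸ radZt l true) ≃ₗ[(↥Asub)ᵐᵒᵖ]
        ((↥(D.Iset e ι κ α l true) → R) ⧸ radZ l true)) := by
  intro l
  let _ (ε : Bool) : Module (↥Asub)ᵐᵒᵖ (↥(D.Jset e ι κ α l ε) → R) :=
    Module.compHom _ (RingHom.op (Subalgebra.inclusion hle).toRingHom)
  let res {ε ε' : Bool} (h : D.Iset e ι κ α l ε ⊆ D.Jset e ι κ α l ε') :
      (↥(D.Jset e ι κ α l ε') → R) →ₗ[(↥Asub)ᵐᵒᵖ] (↥(D.Iset e ι κ α l ε) → R) :=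
    { (LinearMap.funLeft R R (Set.inclusion h)).toAddHom with
      map_smul' := fun a => funLeft_inclusion_op_smul (D.coeff l) hle h (hZsmul l _)
        (hZtsmul l _) (hZact l _) (hZtact l _)
        (fun _ _ ht _ hv b => D.coeff_eq_zero_of_notMem_Iset hA hα ht hv (hAsub ▸ b.2)) a.unop }
  have hres_surj {ε ε' : Bool} (h : D.Iset e ι κ α l ε ⊆ D.Jset e ι κ α l ε') :
      Function.Surjective (res h) :=
    LinearMap.funLeft_surjective_of_injective R R _ (Set.inclusion_injective h)
  have hrad {ε : Bool} (h : D.Iset e ι κ α l ε ⊆ D.Jset e ι κ α l ε) (x) :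
      x ∈ radZt l ε ↔ res h x ∈ radZ l ε :=
    (hradZt l _ x).trans <| (forall_sum_mul_eq_zero_iff_formSum_funLeft h (φ l)
      (fun _ ht s => D.form_eq_zero_of_notMem_Iset hA hα hφ ht s.2) x).trans (hradZ l _ _).symm
  have h₀ : D.Iset e ι κ α l false ⊆ D.Jset e ι κ α l false := subset_rfl
  have h₀' : D.Iset e ι κ α l false ⊆ D.Jset e ι κ α l true := Set.subset_univ _
  have h₁ : D.Iset e ι κ α l true ⊆ D.Jset e ι κ α l true := Set.subset_univ _
  have hdisj := D.disjoint_Iset (α := α) hA l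
  refine ⟨⟨.ofBijective (res h₀) ⟨LinearMap.funLeft_injective_of_surjective R R _
      fun t => ⟨⟨t, t.2⟩, rfl⟩, hres_surj h₀⟩, fun t => funLeft_inclusion_single h₀ t.2 t.2⟩,
    ⟨.ofBijective ((res h₀').prod (res h₁)) (bijective_comp_inclusion_prod h₀' h₁ hdisj
      fun t _ => D.mem_Iset_false_or_true hA hα l t), fun t h => ?_, fun t h => ?_⟩,
    Submodule.nonempty_quotient_equiv_of_surjective _ _ _ (res h₀).toAddMonoidHom
      (hres_surj h₀) (res h₀).map_smul (hrad h₀),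
    Submodule.nonempty_quotient_equiv_of_surjective _ _ _ (res h₁).toAddMonoidHom
      (hres_surj h₁) (res h₁).map_smul (hrad h₁)⟩
  · exact Prod.ext (funLeft_inclusion_single h₀' h _)
      (funLeft_inclusion_single_of_notMem h₁ (Set.disjoint_left.1 hdisj h))
  · exact Prod.ext (funLeft_inclusion_single_of_notMem h₀' (Set.disjoint_right.1 hdisj h))
      (funLeft_inclusion_single h₁ h _)

/-- restriction from `Ã^α` to `A^α` of the standard and simple modules:
(i) `Z̃^{(λ,0)} ≅ Z^{(λ,0)}`; (ii) `Z̃^{(λ,1)} ≅ Z^{(λ,0)} ⊕ Z^{(λ,1)}`;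
(iii) `L̃^{(λ,0)} ≅ L^{(λ,0)}`; (iv) `L̃^{(λ,1)} ≅ L^{(λ,1)}`, all as `A^α`-modules. -/
theorem stmt_15
    {R A : Type u} [CommRing R] [Ring A] [Algebra R A]
    {Λp : Type u} [PartialOrder Λp] [Fintype Λp]
    {T : Λp → Type u} [∀ l, Fintype (T l)] [∀ l, DecidableEq (T l)]
    {Λt M X : Type u} [PartialOrder Λt] [PartialOrder X] [Fintype M]
    (D : CellDatum R A Λp T)
    (ι : Λp → Λt) (κ : M → Λt) (e : M → A)
    (hA : D.IdemData ι κ e)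
    (α : Λt → X) (hα : Monotone α)
    (φ : ∀ l, T l → T l → R) (hφ : D.FormData φ)
    -- the Levi type subalgebra `A^α` and its standard module data
    (Asub : Subalgebra R A) (hAsub : Asub.toSubmodule = D.levi e ι κ α)
    [∀ (l : Λp) (ε : Bool), Fintype ↥(D.Iset e ι κ α l ε)]
    [∀ (l : Λp) (ε : Bool), Module (↥Asub)ᵐᵒᵖ (↥(D.Iset e ι κ α l ε) → R)]
    (hZsmul : ∀ (l : Λp) (ε : Bool) (r : R) (a : (↥Asub)ᵐᵒᵖ)
      (x : ↥(D.Iset e ι κ α l ε) → R), a • (r • x) = r • (a • x))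
    (hZact : ∀ (l : Λp) (ε : Bool) (t : ↥(D.Iset e ι κ α l ε)) (a : Asub),
      (op a) • (Pi.single t 1 : ↥(D.Iset e ι κ α l ε) → R) =
        fun v => D.coeff l t.1 a.1 v.1)
    (radZ : ∀ (l : Λp) (ε : Bool), Submodule (↥Asub)ᵐᵒᵖ (↥(D.Iset e ι κ α l ε) → R))
    (hradZ : ∀ (l : Λp) (ε : Bool) (x : ↥(D.Iset e ι κ α l ε) → R),
      x ∈ radZ l ε ↔ ∀ y,
        formSum (fun s t : ↥(D.Iset e ι κ α l ε) => φ l s.1 t.1) x y = 0)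
    -- the parabolic type subalgebra `Ã^α` and its right standard module data
    (Asubt : Subalgebra R A) (hAsubt : Asubt.toSubmodule = D.parab e ι κ α)
    (hle : Asub ≤ Asubt)
    [∀ (l : Λp) (ε : Bool), Fintype ↥(D.Jset e ι κ α l ε)]
    [∀ (l : Λp) (ε : Bool), Module (↥Asubt)ᵐᵒᵖ (↥(D.Jset e ι κ α l ε) → R)]
    (hZtsmul : ∀ (l : Λp) (ε : Bool) (r : R) (a : (↥Asubt)ᵐᵒᵖ)
      (x : ↥(D.Jset e ι κ α l ε) → R), a • (r • x) = r • (a • x))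
    (hZtact : ∀ (l : Λp) (ε : Bool) (t : ↥(D.Jset e ι κ α l ε)) (a : Asubt),
      (op a) • (Pi.single t 1 : ↥(D.Jset e ι κ α l ε) → R) =
        fun v => D.coeff l t.1 a.1 v.1)
    (radZt : ∀ (l : Λp) (ε : Bool), Submodule (↥Asubt)ᵐᵒᵖ (↥(D.Jset e ι κ α l ε) → R))
    (hradZt : ∀ (l : Λp) (ε : Bool) (x : ↥(D.Jset e ι κ α l ε) → R),
      x ∈ radZt l ε ↔ ∀ s : ↥(D.Iset e ι κ α l ε),
        ∑ t, x t * φ l t.1 s.1 = 0) :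
    ∀ l : Λp,
      letI : Module (↥Asub)ᵐᵒᵖ (↥(D.Jset e ι κ α l false) → R) :=
        Module.compHom _ (RingHom.op (Subalgebra.inclusion hle).toRingHom)
      letI : Module (↥Asub)ᵐᵒᵖ (↥(D.Jset e ι κ α l true) → R) :=
        Module.compHom _ (RingHom.op (Subalgebra.inclusion hle).toRingHom)
      letI : Module (↥Asub)ᵐᵒᵖ ((↥(D.Jset e ι κ α l false) → R) ⧸ radZt l false) :=
        Module.compHom _ (RingHom.op (Subalgebra.inclusion hle).toRingHom)
      letI : Module (↥Asub)ᵐᵒᵖ ((↥(D.Jset e ι κ α l true) → R) ⧸ radZt l true) :=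
        Module.compHom _ (RingHom.op (Subalgebra.inclusion hle).toRingHom)
      -- (i)
      (∃ F : (↥(D.Jset e ι κ α l false) → R) ≃ₗ[(↥Asub)ᵐᵒᵖ]
          (↥(D.Iset e ι κ α l false) → R),
        ∀ t : ↥(D.Jset e ι κ α l false),
          F (Pi.single t 1) = Pi.single (⟨t.1, t.2⟩ : ↥(D.Iset e ι κ α l false)) 1) ∧
      -- (ii)
      (∃ F : (↥(D.Jset e ι κ α l true) → R) ≃ₗ[(↥Asub)ᵐᵒᵖ]
          ((↥(D.Iset e ι κ α l false) → R) × (↥(D.Iset e ι κ α l true) → R)),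
        (∀ (t : T l) (h : t ∈ D.Iset e ι κ α l false),
          F (Pi.single (⟨t, Set.mem_univ t⟩ : ↥(D.Jset e ι κ α l true)) 1) =
            (Pi.single ⟨t, h⟩ 1, 0)) ∧
        (∀ (t : T l) (h : t ∈ D.Iset e ι κ α l true),
          F (Pi.single (⟨t, Set.mem_univ t⟩ : ↥(D.Jset e ι κ α l true)) 1) =
            (0, Pi.single ⟨t, h⟩ 1))) ∧
      -- (iii)
      Nonempty (((↥(D.Jset e ι κ α l false) → R) ⧸ radZt l false) ≃ₗ[(↥Asub)ᵐᵒᵖ]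
        ((↥(D.Iset e ι κ α l false) → R) ⧸ radZ l false)) ∧
      -- (iv)
      Nonempty (((↥(D.Jset e ι κ α l true) → R) ⧸ radZt l true) ≃ₗ[(↥Asub)ᵐᵒᵖ]
        ((↥(D.Iset e ι κ α l true) → R) ⧸ radZ l true)) :=
  stmt_15_general D ι κ e hA α hα φ hφ Asub hAsub hZsmul hZact radZ hradZ Asubt hle hZtsmul hZtact
    radZt hradZt
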